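/- Let G = (V, E) be a finite simple graph with vertex weights W : V → ℕ⁺, Y a maximal feasible dual solution, T the set of tight vertices with respect to Y, and OPT the minimum weight of a vertex cover of G. Then ∑_{v ∈ T} W(v) ≤ 2 · OPT, i.e., the tight vertices form a 2-approximate vertex cover. -/
import Mathlib


open Finset

/-- The tight vertices of a maximal feasible dual solution form a 2-approximate
vertex cover: their total weight is at most twice that of any vertex cover,
in particular at most twice the minimum weight OPT. -/
theorem stmt_2 {V : Type*} [Fintype V] [DecidableEq V]
    (E : Finset (Sym2 V)) (hE : ∀ e ∈ E, ¬ e.IsDiag)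
    (W : V → ℕ) (hW : ∀ v, 1 ≤ W v)
    (Y : Sym2 V → ℝ) (hY : ∀ e, 0 ≤ Y e)
    (hfeas : ∀ v : V, ∑ e ∈ E.filter (fun e => v ∈ e), Y e ≤ (W v : ℝ))
    (hmax : ∀ e ∈ E, ∀ ε : ℝ, 0 < ε →
      ¬ (∀ v : V, ∑ e' ∈ E.filter (fun e' => v ∈ e'),
            Function.update Y e (Y e + ε) e' ≤ (W v : ℝ)))
    (T : Finset V)
    (hT : ∀ v : V, v ∈ T ↔ ∑ e ∈ E.filter (fun e => v ∈ e), Y e = (W v : ℝ)) :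
    ∀ C : Finset V, (∀ e ∈ E, ∃ v ∈ C, v ∈ e) →
      ∑ v ∈ T, (W v : ℝ) ≤ 2 * ∑ v ∈ C, (W v : ℝ) := by
  intro C hC
  have key : ∀ S : Finset V,
      ∑ v ∈ S, ∑ e ∈ E.filter (fun e => v ∈ e), Y e
        = ∑ e ∈ E, ((S.filter (fun v => v ∈ e)).card : ℝ) * Y e := by
    intro S
    simp_rw [Finset.sum_filter]
    rw [Finset.sum_comm]
    refine Finset.sum_congr rfl fun e _ => ?_
    rw [← Finset.sum_filter, Finset.sum_const, nsmul_eq_mul]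
  -- step 1: ∑_{v∈T} W v ≤ ∑_{v} inner sums
  have h1 : ∑ v ∈ T, (W v : ℝ)
      ≤ ∑ v : V, ∑ e ∈ E.filter (fun e => v ∈ e), Y e := by
    calc ∑ v ∈ T, (W v : ℝ)
        = ∑ v ∈ T, ∑ e ∈ E.filter (fun e => v ∈ e), Y e :=
          Finset.sum_congr rfl fun v hv => ((hT v).1 hv).symm
      _ ≤ ∑ v : V, ∑ e ∈ E.filter (fun e => v ∈ e), Y e := by
          apply Finset.sum_le_sum_of_subset_of_nonneg (Finset.subset_univ T)
          intro v _ _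
          exact Finset.sum_nonneg fun e _ => hY e
  -- each edge has exactly two endpoints
  have hcard2 : ∀ e ∈ E, (Finset.univ.filter (fun v => v ∈ e)).card = 2 := by
    intro e he
    induction e using Sym2.ind with
    | _ a b =>
      have hab : a ≠ b := by
        simpa [Sym2.isDiag_iff_proj_eq] using hE _ he
      have : Finset.univ.filter (fun v => v ∈ s(a, b)) = {a, b} := by
        ext v; simp [Sym2.mem_iff, or_comm]
      rw [this, Finset.card_pair hab]
  have h2 : ∑ v : V, ∑ e ∈ E.filter (fun e => v ∈ e), Y e
      = 2 * ∑ e ∈ E, Y e := by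
    rw [key, Finset.mul_sum]
    refine Finset.sum_congr rfl fun e he => ?_
    rw [hcard2 e he]; norm_num
  -- cover side
  have h3 : ∑ e ∈ E, Y e ≤ ∑ v ∈ C, (W v : ℝ) := by
    have : ∑ e ∈ E, Y e ≤ ∑ v ∈ C, ∑ e ∈ E.filter (fun e => v ∈ e), Y e := by
      rw [key]
      refine Finset.sum_le_sum fun e he => ?_
      have hpos : 1 ≤ (C.filter (fun v => v ∈ e)).card := by
        obtain ⟨v, hvC, hve⟩ := hC e he
        exact Finset.card_pos.2 ⟨v, Finset.mem_filter.2 ⟨hvC, hve⟩⟩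
      calc Y e = 1 * Y e := (one_mul _).symm
        _ ≤ ((C.filter (fun v => v ∈ e)).card : ℝ) * Y e := by
            apply mul_le_mul_of_nonneg_right _ (hY e)
            exact_mod_cast hpos
    exact this.trans (Finset.sum_le_sum fun v _ => hfeas v)
  linarith
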